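/- arXiv:2506.04878 — 6 statements merged into one kernel-verified Lean document; each statement's English description precedes it below -/
import Mathlib

section
/- Under the standing assumptions, for every θ ∈ ℝ^d, every 0 < λ < 1 and every ε_h ∈ (0,1/2], the tamed coefficient satisfies the dissipativity bound ⟨h_λ(θ), θ⟩ ≥ a|θ|² − b. -/
open Real

/-- `a • θ` itself satisfies the bound because `b ≥ 0`, and the bound is affine in the drift,
so it passes to convex combinations of `g` and `a • θ`. -/
theorem le_inner_add_smul_sub_of_le_inner {E : Type*} [NormedAddCommGroup E]
    [InnerProductSpace ℝ E] {a b t : ℝ} {g θ : E} (hb : 0 ≤ b) (ht₀ : 0 ≤ t) (ht₁ : t ≤ 1)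
    (hg : a * ‖θ‖ ^ 2 - b ≤ inner ℝ g θ) :
    a * ‖θ‖ ^ 2 - b ≤ inner ℝ (a • θ + t • (g - a • θ)) θ := by
  have hexpand : inner ℝ (a • θ + t • (g - a • θ)) θ
      = a * ‖θ‖ ^ 2 + t * (inner ℝ g θ - a * ‖θ‖ ^ 2) := by
    simp only [inner_add_left, inner_sub_left, real_inner_smul_left,
      real_inner_self_eq_norm_sq]
  rw [hexpand]
  nlinarith

theorem inv_one_add_mul_rpow_rpow_mem_Icc {lam r p eps : ℝ} (hlam : 0 ≤ lam) (hr : 0 ≤ r)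
    (heps : 0 ≤ eps) : ((1 + lam * r ^ p) ^ eps)⁻¹ ∈ Set.Icc (0 : ℝ) 1 := by
  have hbase : 1 ≤ 1 + lam * r ^ p := le_add_of_nonneg_right (by positivity)
  have hpow : 1 ≤ (1 + lam * r ^ p) ^ eps := one_le_rpow hbase heps
  exact ⟨inv_nonneg.mpr (zero_le_one.trans hpow), inv_le_one_of_one_le₀ hpow⟩

theorem kTULA_tamed_dissipativity_general
    {d : ℕ}
    (h : EuclideanSpace ℝ (Fin d) → EuclideanSpace ℝ (Fin d))
    (a b : ℝ)
    (hb : 0 < b)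
    (l : ℕ)
    (hdiss : ∀ θ : EuclideanSpace ℝ (Fin d), a * ‖θ‖ ^ 2 - b ≤ (inner ℝ (h θ) θ : ℝ))
    (hlam : ℝ → ℝ → EuclideanSpace ℝ (Fin d) → EuclideanSpace ℝ (Fin d))
    (hlam_def : ∀ (lam eps : ℝ) (θ : EuclideanSpace ℝ (Fin d)),
      hlam lam eps θ =
        a • θ + ((1 + lam * ‖θ‖ ^ (((l : ℝ) + 1) / eps)) ^ eps)⁻¹ • (h θ - a • θ)) :
    ∀ (θ : EuclideanSpace ℝ (Fin d)) (lam eps : ℝ),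
      0 < lam → lam < 1 → 0 < eps → eps ≤ 1 / 2 →
      a * ‖θ‖ ^ 2 - b ≤ (inner ℝ (hlam lam eps θ) θ : ℝ) := by
  intro θ lam eps hlam₀ _ heps₀ _
  obtain ⟨ht₀, ht₁⟩ :=
    inv_one_add_mul_rpow_rpow_mem_Icc (p := ((l : ℝ) + 1) / eps) hlam₀.le (norm_nonneg θ) heps₀.le
  rw [hlam_def]
  exact le_inner_add_smul_sub_of_le_inner hb.le ht₀ ht₁ (hdiss θ)

theorem kTULA_tamed_dissipativity
    {d : ℕ} (hd : 0 < d)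
    (u : EuclideanSpace ℝ (Fin d) → ℝ) (hu : ContDiff ℝ 3 u)
    (h : EuclideanSpace ℝ (Fin d) → EuclideanSpace ℝ (Fin d))
    (H : EuclideanSpace ℝ (Fin d) →
      EuclideanSpace ℝ (Fin d) →L[ℝ] EuclideanSpace ℝ (Fin d))
    (hgrad : ∀ θ, h θ = gradient u θ)
    (hHess : ∀ θ, H θ = fderiv ℝ (gradient u) θ)
    (L K_H K_h a b : ℝ)
    (hL : 0 < L) (hK_H : 0 < K_H) (hK_h : 0 < K_h) (ha : 0 < a) (hb : 0 < b)
    (l : ℕ) (hl : 1 ≤ l)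
    (hH_lip : ∀ θ θ' : EuclideanSpace ℝ (Fin d),
      ‖H θ - H θ'‖ ≤ L * (1 + ‖θ‖ + ‖θ'‖) ^ (l - 1) * ‖θ - θ'‖)
    (hH_bd : ∀ θ : EuclideanSpace ℝ (Fin d), ‖H θ‖ ≤ K_H * (1 + ‖θ‖ ^ l))
    (hh_bd : ∀ θ : EuclideanSpace ℝ (Fin d), ‖h θ‖ ≤ K_h * (1 + ‖θ‖ ^ (l + 1)))
    (hdiss : ∀ θ : EuclideanSpace ℝ (Fin d), a * ‖θ‖ ^ 2 - b ≤ (inner ℝ (h θ) θ : ℝ))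
    (hlam : ℝ → ℝ → EuclideanSpace ℝ (Fin d) → EuclideanSpace ℝ (Fin d))
    (hlam_def : ∀ (lam eps : ℝ) (θ : EuclideanSpace ℝ (Fin d)),
      hlam lam eps θ =
        a • θ + ((1 + lam * ‖θ‖ ^ (((l : ℝ) + 1) / eps)) ^ eps)⁻¹ • (h θ - a • θ)) :
    ∀ (θ : EuclideanSpace ℝ (Fin d)) (lam eps : ℝ),
      0 < lam → lam < 1 → 0 < eps → eps ≤ 1 / 2 →
      a * ‖θ‖ ^ 2 - b ≤ (inner ℝ (hlam lam eps θ) θ : ℝ) :=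
  kTULA_tamed_dissipativity_general h a b hb l hdiss hlam hlam_def
end

section
/- Under the standing assumptions, for every θ ∈ ℝ^d, every 0 < λ < 1 and every ε_h ∈ (0,1/2], the tamed coefficient satisfies both growth bounds |h_λ(θ)| ≤ 2a|θ| + 2K_h λ^{−1/2} and |h_λ(θ)| ≤ (2a + K_h)(1 + |θ|^{l+1}). -/
open Real

theorem kTULA_tamed_growth
    {d : ℕ} (hd : 0 < d)
    (u : EuclideanSpace ℝ (Fin d) → ℝ) (hu : ContDiff ℝ 3 u)
    (h : EuclideanSpace ℝ (Fin d) → EuclideanSpace ℝ (Fin d))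
    (H : EuclideanSpace ℝ (Fin d) →
      EuclideanSpace ℝ (Fin d) →L[ℝ] EuclideanSpace ℝ (Fin d))
    (hgrad : ∀ θ, h θ = gradient u θ)
    (hHess : ∀ θ, H θ = fderiv ℝ (gradient u) θ)
    (L K_H K_h a b : ℝ)
    (hL : 0 < L) (hK_H : 0 < K_H) (hK_h : 0 < K_h) (ha : 0 < a) (hb : 0 < b)
    (l : ℕ) (hl : 1 ≤ l)
    (hH_lip : ∀ θ θ' : EuclideanSpace ℝ (Fin d),
      ‖H θ - H θ'‖ ≤ L * (1 + ‖θ‖ + ‖θ'‖) ^ (l - 1) * ‖θ - θ'‖)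
    (hH_bd : ∀ θ : EuclideanSpace ℝ (Fin d), ‖H θ‖ ≤ K_H * (1 + ‖θ‖ ^ l))
    (hh_bd : ∀ θ : EuclideanSpace ℝ (Fin d), ‖h θ‖ ≤ K_h * (1 + ‖θ‖ ^ (l + 1)))
    (hdiss : ∀ θ : EuclideanSpace ℝ (Fin d), a * ‖θ‖ ^ 2 - b ≤ (inner ℝ (h θ) θ : ℝ))
    (hlam : ℝ → ℝ → EuclideanSpace ℝ (Fin d) → EuclideanSpace ℝ (Fin d))
    (hlam_def : ∀ (lam eps : ℝ) (θ : EuclideanSpace ℝ (Fin d)),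
      hlam lam eps θ =
        a • θ + ((1 + lam * ‖θ‖ ^ (((l : ℝ) + 1) / eps)) ^ eps)⁻¹ • (h θ - a • θ)) :
    ∀ (θ : EuclideanSpace ℝ (Fin d)) (lam eps : ℝ),
      0 < lam → lam < 1 → 0 < eps → eps ≤ 1 / 2 →
      ‖hlam lam eps θ‖ ≤ 2 * a * ‖θ‖ + 2 * K_h * lam ^ (-(1 / 2) : ℝ) ∧
      ‖hlam lam eps θ‖ ≤ (2 * a + K_h) * (1 + ‖θ‖ ^ (l + 1)) := by
  intro θ lam eps hl0 hl1 he0 he2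
  set t := ‖θ‖ with ht_def
  have ht : 0 ≤ t := norm_nonneg _
  set s : ℝ := t ^ (((l : ℝ) + 1) / eps) with hs_def
  have hs : 0 ≤ s := Real.rpow_nonneg ht _
  have hls : 0 ≤ lam * s := mul_nonneg hl0.le hs
  set P : ℝ := (1 + lam * s) ^ eps with hP_def
  have hP0 : 0 < P := Real.rpow_pos_of_pos (by linarith) _
  have hP1 : 1 ≤ P := Real.one_le_rpow (by linarith) he0.le
  set c : ℝ := P⁻¹ with hc_def
  have hc0 : 0 ≤ c := inv_nonneg.2 hP0.le
  have hc1 : c ≤ 1 := inv_le_one_of_one_le₀ hP1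
  -- key: lam^eps * t^(l+1) = (lam*s)^eps
  have hse : s ^ eps = t ^ (l + 1) := by
    rw [hs_def, ← Real.rpow_natCast t (l + 1), ← Real.rpow_mul ht]
    congr 1
    push_cast
    field_simp
  have h1 : lam ^ eps * t ^ (l + 1) = (lam * s) ^ eps := by
    rw [Real.mul_rpow hl0.le hs, hse]
  have h2 : (lam * s) ^ eps ≤ P := by
    exact Real.rpow_le_rpow hls (by linarith) he0.le
  have hle : lam ^ eps * t ^ (l + 1) ≤ P := h1 ▸ h2
  have hlame : (0:ℝ) < lam ^ eps := Real.rpow_pos_of_pos hl0 _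
  have hneg : lam ^ (-eps : ℝ) = (lam ^ eps)⁻¹ := Real.rpow_neg hl0.le _
  have hkey1 : c * t ^ (l + 1) ≤ lam ^ (-eps : ℝ) := by
    rw [hc_def, inv_mul_eq_div, div_le_iff₀ hP0, hneg, inv_mul_eq_div,
      le_div_iff₀ hlame]
    nlinarith [pow_nonneg ht (l + 1)]
  have hexp : lam ^ (-eps : ℝ) ≤ lam ^ (-(1/2) : ℝ) :=
    Real.rpow_le_rpow_of_exponent_ge hl0 hl1.le (by linarith)
  have hone : (1:ℝ) ≤ lam ^ (-(1/2) : ℝ) :=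
    Real.one_le_rpow_of_pos_of_le_one_of_nonpos hl0 hl1.le (by norm_num)
  have hkey : c * (1 + t ^ (l + 1)) ≤ 2 * lam ^ (-(1/2) : ℝ) := by
    have := hkey1.trans hexp
    nlinarith
  -- norm bound
  have hnorm : ‖hlam lam eps θ‖ ≤ a * t + c * (K_h * (1 + t ^ (l + 1)) + a * t) := by
    rw [hlam_def]
    refine (norm_add_le _ _).trans ?_
    rw [norm_smul, norm_smul, Real.norm_eq_abs, Real.norm_eq_abs,
      abs_of_pos ha, abs_of_nonneg hc0]
    gcongr
    refine (norm_sub_le _ _).trans ?_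
    have := hh_bd θ
    rw [norm_smul, Real.norm_eq_abs, abs_of_pos ha]
    exact add_le_add this le_rfl
  have htpow : t ≤ 1 + t ^ (l + 1) := by
    rcases le_total t 1 with h' | h'
    · nlinarith [pow_nonneg ht (l + 1)]
    · have : t ≤ t ^ (l + 1) := le_self_pow₀ h' (Nat.succ_ne_zero l)
      linarith
  have hT : (0:ℝ) ≤ 1 + t ^ (l + 1) := by positivity
  constructor
  · refine hnorm.trans ?_
    have hc2 : c * (K_h * (1 + t ^ (l + 1))) ≤ 2 * K_h * lam ^ (-(1/2) : ℝ) := by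
      calc c * (K_h * (1 + t ^ (l + 1))) = K_h * (c * (1 + t ^ (l + 1))) := by ring
        _ ≤ K_h * (2 * lam ^ (-(1/2) : ℝ)) :=
            mul_le_mul_of_nonneg_left hkey hK_h.le
        _ = 2 * K_h * lam ^ (-(1/2) : ℝ) := by ring
    have hc3 : c * (a * t) ≤ a * t :=
      mul_le_of_le_one_left (mul_nonneg ha.le ht) hc1
    have hdist : c * (K_h * (1 + t ^ (l + 1)) + a * t)
        = c * (K_h * (1 + t ^ (l + 1))) + c * (a * t) := by ring
    linarith [hdist ▸ (le_refl (c * (K_h * (1 + t ^ (l + 1)) + a * t)))]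
  · refine hnorm.trans ?_
    have h4 : c * (K_h * (1 + t ^ (l + 1)) + a * t) ≤ K_h * (1 + t ^ (l + 1)) + a * t :=
      mul_le_of_le_one_left (by positivity) hc1
    have h5 : a * t ≤ a * (1 + t ^ (l + 1)) := mul_le_mul_of_nonneg_left htpow ha.le
    have h6 : (2 * a + K_h) * (1 + t ^ (l + 1))
        = 2 * (a * (1 + t ^ (l + 1))) + K_h * (1 + t ^ (l + 1)) := by ring
    linarith
end

section
/- Under the standing assumptions, for every θ ∈ ℝ^d, every 0 < λ < 1 and every ε_h ∈ (0,1/2], the derivative of the tamed coefficient satisfies the operator-norm bound ‖∇h_λ(θ)‖ ≤ L₀ λ^{−ε_h}, where L₀ := 2a + 4K_H + (l+1)(2K_h + a). -/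
/-!
Write `h_λ(θ) = aθ + T(θ)(h(θ) - aθ)` with taming factor `T = (1 + λ|θ|^p)^{-ε}`, `p = (l+1)/ε`.
The product rule gives `‖∇h_λ‖ ≤ a + T(‖H‖ + a) + (l+1) T q |h - aθ|` with
`q = λ|θ|^{p-1} / (1 + λ|θ|^p)`. Since `(λ|θ|^p)^ε = λ^ε |θ|^{l+1}`, the taming factor satisfies
`T (1 + |θ|^{l+1}) ≤ 2λ^{-ε}`, which absorbs the polynomial growth of `H` and `h`, while
`q ≤ 1` and `q |θ| ≤ 1` absorb the extra factor coming from differentiating `T`.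
-/

open Real

noncomputable def tamingFactor (lam eps p r : ℝ) : ℝ := (1 + lam * r ^ p) ^ (-eps)

section Scalar

variable {lam eps p r : ℝ}

lemma one_le_one_add_mul_rpow (hlam : 0 ≤ lam) (hr : 0 ≤ r) : 1 ≤ 1 + lam * r ^ p :=
  le_add_of_nonneg_right (mul_nonneg hlam (rpow_nonneg hr p))

lemma one_add_mul_rpow_pos (hlam : 0 ≤ lam) (hr : 0 ≤ r) : 0 < 1 + lam * r ^ p :=
  one_pos.trans_le (one_le_one_add_mul_rpow hlam hr)

lemma tamingFactor_pos (hlam : 0 ≤ lam) (hr : 0 ≤ r) : 0 < tamingFactor lam eps p r :=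
  rpow_pos_of_pos (one_add_mul_rpow_pos hlam hr) _

lemma tamingFactor_le_one (hlam : 0 ≤ lam) (heps : 0 ≤ eps) (hr : 0 ≤ r) :
    tamingFactor lam eps p r ≤ 1 :=
  rpow_le_one_of_one_le_of_nonpos (one_le_one_add_mul_rpow hlam hr) (neg_nonpos.2 heps)

lemma tamingFactor_mul_pow_le {n : ℕ} (hlam : 0 < lam) (heps : 0 ≤ eps) (hr : 0 ≤ r)
    (hn : eps * p = n) : tamingFactor lam eps p r * r ^ n ≤ lam ^ (-eps) := by
  have hA : 0 < 1 + lam * r ^ p := one_add_mul_rpow_pos hlam.le hr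
  have key : lam ^ eps * r ^ n ≤ (1 + lam * r ^ p) ^ eps :=
    calc lam ^ eps * r ^ n = (lam * r ^ p) ^ eps := by
          rw [mul_rpow hlam.le (rpow_nonneg hr p), ← rpow_mul hr, mul_comm p, hn, rpow_natCast]
      _ ≤ (1 + lam * r ^ p) ^ eps := by
          gcongr
          linarith
  rw [tamingFactor, rpow_neg hA.le, rpow_neg hlam.le, inv_mul_le_iff₀ (rpow_pos_of_pos hA _),
    ← div_eq_mul_inv, le_div_iff₀ (rpow_pos_of_pos hlam _), mul_comm]
  exact key

lemma tamingFactor_mul_one_add_pow_le {n : ℕ} (hlam₀ : 0 < lam) (hlam₁ : lam ≤ 1)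
    (heps : 0 ≤ eps) (hr : 0 ≤ r) (hn : eps * p = n) :
    tamingFactor lam eps p r * (1 + r ^ n) ≤ 2 * lam ^ (-eps) := by
  have : 1 ≤ lam ^ (-eps) := one_le_rpow_of_pos_of_le_one_of_nonpos hlam₀ hlam₁ (neg_nonpos.2 heps)
  rw [mul_one_add]
  linarith [tamingFactor_le_one (p := p) hlam₀.le heps hr, tamingFactor_mul_pow_le hlam₀ heps hr hn]

lemma pow_le_one_add_pow_succ (hr : 0 ≤ r) (n : ℕ) : r ^ n ≤ 1 + r ^ (n + 1) := by
  rcases le_total r 1 with h | h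
  · linarith [pow_le_one₀ hr h (n := n), pow_nonneg hr (n + 1)]
  · linarith [pow_le_pow_right₀ h (Nat.le_add_right n 1)]

lemma mul_rpow_sub_one_div_le_one (hlam₀ : 0 ≤ lam) (hlam₁ : lam ≤ 1) (hp : 1 ≤ p) (hr : 0 ≤ r) :
    lam * r ^ (p - 1) / (1 + lam * r ^ p) ≤ 1 := by
  rw [div_le_one (one_add_mul_rpow_pos hlam₀ hr)]
  rcases le_total r 1 with h | h
  · have : r ^ (p - 1) ≤ 1 := rpow_le_one hr h (by linarith)
    nlinarith [rpow_nonneg hr p]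
  · have : r ^ (p - 1) ≤ r ^ p := rpow_le_rpow_of_exponent_le h (by linarith)
    nlinarith

lemma mul_rpow_sub_one_div_mul_le_one (hlam : 0 ≤ lam) (hp : 1 < p) (hr : 0 ≤ r) :
    lam * r ^ (p - 1) / (1 + lam * r ^ p) * r ≤ 1 := by
  rw [div_mul_eq_mul_div, div_le_one (one_add_mul_rpow_pos hlam hr), mul_assoc,
    ← rpow_add_one' hr (by linarith), sub_add_cancel]
  linarith

end Scalar

section Tamed

variable {E : Type*} [NormedAddCommGroup E] [InnerProductSpace ℝ E]
  {lam eps p : ℝ} {x : E}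

lemma hasFDerivAt_tamingFactor_norm (hlam : 0 ≤ lam) (hp : 1 < p) :
    HasFDerivAt (fun y : E ↦ tamingFactor lam eps p ‖y‖)
      ((-eps * (1 + lam * ‖x‖ ^ p) ^ (-eps - 1) * (lam * (p * ‖x‖ ^ (p - 2)))) •
        innerSL ℝ x) x := by
  have hA : 1 + lam * ‖x‖ ^ p ≠ 0 := (one_add_mul_rpow_pos hlam (norm_nonneg x)).ne'
  have := (((hasFDerivAt_norm_rpow x hp).const_mul lam).const_add 1).rpow_const (p := -eps)
    (Or.inl hA)
  simpa only [tamingFactor, smul_smul] using this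

lemma norm_tamingFactor_deriv (hlam : 0 ≤ lam) (heps : 0 ≤ eps) (hp : 1 < p) :
    ‖(-eps * (1 + lam * ‖x‖ ^ p) ^ (-eps - 1) * (lam * (p * ‖x‖ ^ (p - 2)))) • innerSL ℝ x‖ =
      eps * p * tamingFactor lam eps p ‖x‖ *
        (lam * ‖x‖ ^ (p - 1) / (1 + lam * ‖x‖ ^ p)) := by
  have hA : 0 < 1 + lam * ‖x‖ ^ p := one_add_mul_rpow_pos hlam (norm_nonneg x)
  have hr : ‖x‖ ^ (p - 2) * ‖x‖ = ‖x‖ ^ (p - 1) := by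
    rw [← rpow_add_one' (norm_nonneg x) (by linarith)]; ring_nf
  rw [norm_smul, innerSL_apply_norm, rpow_sub_one hA.ne', tamingFactor, ← hr, Real.norm_eq_abs,
    abs_of_nonpos]
  · ring
  · rw [neg_mul, neg_mul, neg_nonpos]
    exact mul_nonneg (mul_nonneg heps (div_nonneg (rpow_nonneg hA.le _) hA.le))
      (mul_nonneg hlam (mul_nonneg (by linarith) (rpow_nonneg (norm_nonneg x) _)))

variable {f : E → E} {f' : E →L[ℝ] E}

lemma hasFDerivAt_tamed (hf : HasFDerivAt f f' x) (c : ℝ) (hlam : 0 ≤ lam) (hp : 1 < p) :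
    HasFDerivAt (fun y ↦ c • y + tamingFactor lam eps p ‖y‖ • (f y - c • y))
      (c • ContinuousLinearMap.id ℝ E +
        (tamingFactor lam eps p ‖x‖ • (f' - c • ContinuousLinearMap.id ℝ E) +
          ((-eps * (1 + lam * ‖x‖ ^ p) ^ (-eps - 1) * (lam * (p * ‖x‖ ^ (p - 2)))) •
            innerSL ℝ x).smulRight (f x - c • x))) x :=
  ((hasFDerivAt_id x).const_smul c).add
    ((hasFDerivAt_tamingFactor_norm hlam hp).smul (hf.sub ((hasFDerivAt_id x).const_smul c)))

lemma norm_fderiv_tamed_le (hf : HasFDerivAt f f' x) (c : ℝ) (hlam : 0 ≤ lam) (heps : 0 ≤ eps)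
    (hp : 1 < p) :
    ‖fderiv ℝ (fun y ↦ c • y + tamingFactor lam eps p ‖y‖ • (f y - c • y)) x‖ ≤
      |c| + (tamingFactor lam eps p ‖x‖ * (‖f'‖ + |c|) +
        eps * p * tamingFactor lam eps p ‖x‖ * (lam * ‖x‖ ^ (p - 1) / (1 + lam * ‖x‖ ^ p)) *
          ‖f x - c • x‖) := by
  have hid : ‖c • ContinuousLinearMap.id ℝ E‖ ≤ |c| :=
    (ContinuousLinearMap.opNorm_smul_le _ _).trans
      (mul_le_of_le_one_right (abs_nonneg c) ContinuousLinearMap.norm_id_le)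
  have hT := tamingFactor_pos (eps := eps) (p := p) hlam (norm_nonneg x)
  rw [(hasFDerivAt_tamed hf c hlam hp).fderiv]
  refine (norm_add_le _ _).trans (add_le_add hid ((norm_add_le _ _).trans (add_le_add ?_ ?_)))
  · rw [norm_smul, Real.norm_eq_abs, abs_of_pos hT]
    exact mul_le_mul_of_nonneg_left ((norm_sub_le _ _).trans (add_le_add_right hid _)) hT.le
  · rw [ContinuousLinearMap.norm_smulRight_apply, norm_tamingFactor_deriv hlam heps hp]

end Tamed

lemma tamed_deriv_terms_le {lam eps p r a K_H K_h nH nV : ℝ} {l : ℕ} (hlam₀ : 0 < lam)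
    (hlam₁ : lam ≤ 1) (heps : 0 ≤ eps) (hp : 1 < p) (hn : eps * p = l + 1) (hr : 0 ≤ r)
    (ha : 0 ≤ a) (hK_H : 0 ≤ K_H) (hK_h : 0 ≤ K_h)
    (hnH : nH ≤ K_H * (1 + r ^ l)) (hnV : nV ≤ K_h * (1 + r ^ (l + 1)) + a * r) :
    |a| + (tamingFactor lam eps p r * (nH + |a|) +
      eps * p * tamingFactor lam eps p r * (lam * r ^ (p - 1) / (1 + lam * r ^ p)) * nV) ≤
      (2 * a + 4 * K_H + (l + 1) * (2 * K_h + a)) * lam ^ (-eps) := by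
  set T := tamingFactor lam eps p r
  set q := lam * r ^ (p - 1) / (1 + lam * r ^ p)
  have hρ : 1 ≤ lam ^ (-eps) :=
    one_le_rpow_of_pos_of_le_one_of_nonpos hlam₀ hlam₁ (neg_nonpos.2 heps)
  have hT₀ : 0 ≤ T := (tamingFactor_pos hlam₀.le hr).le
  have hT₁ : T ≤ 1 := tamingFactor_le_one hlam₀.le heps hr
  have hTn : T * (1 + r ^ (l + 1)) ≤ 2 * lam ^ (-eps) :=
    tamingFactor_mul_one_add_pow_le hlam₀ hlam₁ heps hr (by rw [hn]; push_cast; ring)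
  have hq₀ : 0 ≤ q := div_nonneg (mul_nonneg hlam₀.le (rpow_nonneg hr _))
    (one_add_mul_rpow_pos hlam₀.le hr).le
  have hq₁ : q ≤ 1 := mul_rpow_sub_one_div_le_one hlam₀.le hlam₁ hp.le hr
  have hqr : q * r ≤ 1 := mul_rpow_sub_one_div_mul_le_one hlam₀.le hp hr
  have hpow : 0 ≤ 1 + r ^ (l + 1) := by positivity
  have hH : T * (nH + a) ≤ (4 * K_H + a) * lam ^ (-eps) := by
    have : nH + a ≤ 2 * K_H * (1 + r ^ (l + 1)) + a := by
      nlinarith [mul_le_mul_of_nonneg_left (pow_le_one_add_pow_succ hr l) hK_H,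
        mul_nonneg hK_H (pow_nonneg hr (l + 1))]
    nlinarith
  have hV : T * (q * nV) ≤ (2 * K_h + a) * lam ^ (-eps) := by
    have : q * nV ≤ K_h * (1 + r ^ (l + 1)) + a := by
      nlinarith [mul_le_of_le_one_left (mul_nonneg hK_h hpow) hq₁]
    nlinarith
  rw [abs_of_nonneg ha, hn]
  nlinarith

lemma ContDiff.hasFDerivAt_gradient {F : Type*} [NormedAddCommGroup F] [InnerProductSpace ℝ F]
    [CompleteSpace F] {u : F → ℝ} (hu : ContDiff ℝ 2 u) (x : F) :
    HasFDerivAt (gradient u) (fderiv ℝ (gradient u) x) x :=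
  ((InnerProductSpace.toDual ℝ F).symm.toContinuousLinearEquiv.differentiableAt.comp x
    ((hu.fderiv_right le_rfl).differentiable one_ne_zero x)).hasFDerivAt

theorem kTULA_tamed_deriv_bound_general
    {d : ℕ}
    (u : EuclideanSpace ℝ (Fin d) → ℝ) (hu : ContDiff ℝ 3 u)
    (h : EuclideanSpace ℝ (Fin d) → EuclideanSpace ℝ (Fin d))
    (H : EuclideanSpace ℝ (Fin d) →
      EuclideanSpace ℝ (Fin d) →L[ℝ] EuclideanSpace ℝ (Fin d))
    (hgrad : ∀ θ, h θ = gradient u θ)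
    (hHess : ∀ θ, H θ = fderiv ℝ (gradient u) θ)
    (L K_H K_h a : ℝ)
    (hK_H : 0 < K_H) (hK_h : 0 < K_h) (ha : 0 < a)
    (l : ℕ)
    (hH_bd : ∀ θ : EuclideanSpace ℝ (Fin d), ‖H θ‖ ≤ K_H * (1 + ‖θ‖ ^ l))
    (hh_bd : ∀ θ : EuclideanSpace ℝ (Fin d), ‖h θ‖ ≤ K_h * (1 + ‖θ‖ ^ (l + 1)))
    (hlam : ℝ → ℝ → EuclideanSpace ℝ (Fin d) → EuclideanSpace ℝ (Fin d))
    (hlam_def : ∀ (lam eps : ℝ) (θ : EuclideanSpace ℝ (Fin d)),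
      hlam lam eps θ =
        a • θ + ((1 + lam * ‖θ‖ ^ (((l : ℝ) + 1) / eps)) ^ eps)⁻¹ • (h θ - a • θ)) :
    ∀ (θ : EuclideanSpace ℝ (Fin d)) (lam eps : ℝ),
      0 < lam → lam < 1 → 0 < eps → eps ≤ 1 / 2 →
      ‖fderiv ℝ (hlam lam eps) θ‖ ≤
        (2 * a + 4 * K_H + ((l : ℝ) + 1) * (2 * K_h + a)) * lam ^ (-eps) := by
  intro θ lam eps hlam₀ hlam₁ heps₀ heps₁
  set p := ((l : ℝ) + 1) / eps
  have hn : eps * p = l + 1 := mul_div_cancel₀ _ heps₀.ne'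
  have hp : 1 < p := by
    rw [lt_div_iff₀ heps₀]
    linarith [(Nat.cast_nonneg l : (0 : ℝ) ≤ l)]
  have htamed : hlam lam eps = fun y ↦ a • y + tamingFactor lam eps p ‖y‖ • (h y - a • y) := by
    funext y
    rw [hlam_def, tamingFactor, rpow_neg (one_add_mul_rpow_pos hlam₀.le (norm_nonneg y)).le]
  have hh : HasFDerivAt h (H θ) θ := by
    rw [funext hgrad, hHess]
    exact (hu.of_le (by norm_num)).hasFDerivAt_gradient θ
  have hV : ‖h θ - a • θ‖ ≤ K_h * (1 + ‖θ‖ ^ (l + 1)) + a * ‖θ‖ := by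
    grw [norm_sub_le, hh_bd, norm_smul, Real.norm_eq_abs, abs_of_pos ha]
  rw [htamed]
  exact (norm_fderiv_tamed_le hh a hlam₀.le heps₀.le hp).trans
    (tamed_deriv_terms_le hlam₀ hlam₁.le heps₀.le hp hn (norm_nonneg θ) ha.le hK_H.le hK_h.le
      (hH_bd θ) hV)

theorem kTULA_tamed_deriv_bound
    {d : ℕ} (hd : 0 < d)
    (u : EuclideanSpace ℝ (Fin d) → ℝ) (hu : ContDiff ℝ 3 u)
    (h : EuclideanSpace ℝ (Fin d) → EuclideanSpace ℝ (Fin d))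
    (H : EuclideanSpace ℝ (Fin d) →
      EuclideanSpace ℝ (Fin d) →L[ℝ] EuclideanSpace ℝ (Fin d))
    (hgrad : ∀ θ, h θ = gradient u θ)
    (hHess : ∀ θ, H θ = fderiv ℝ (gradient u) θ)
    (L K_H K_h a b : ℝ)
    (hL : 0 < L) (hK_H : 0 < K_H) (hK_h : 0 < K_h) (ha : 0 < a) (hb : 0 < b)
    (l : ℕ) (hl : 1 ≤ l)
    (hH_lip : ∀ θ θ' : EuclideanSpace ℝ (Fin d),
      ‖H θ - H θ'‖ ≤ L * (1 + ‖θ‖ + ‖θ'‖) ^ (l - 1) * ‖θ - θ'‖)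
    (hH_bd : ∀ θ : EuclideanSpace ℝ (Fin d), ‖H θ‖ ≤ K_H * (1 + ‖θ‖ ^ l))
    (hh_bd : ∀ θ : EuclideanSpace ℝ (Fin d), ‖h θ‖ ≤ K_h * (1 + ‖θ‖ ^ (l + 1)))
    (hdiss : ∀ θ : EuclideanSpace ℝ (Fin d), a * ‖θ‖ ^ 2 - b ≤ (inner ℝ (h θ) θ : ℝ))
    (hlam : ℝ → ℝ → EuclideanSpace ℝ (Fin d) → EuclideanSpace ℝ (Fin d))
    (hlam_def : ∀ (lam eps : ℝ) (θ : EuclideanSpace ℝ (Fin d)),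
      hlam lam eps θ =
        a • θ + ((1 + lam * ‖θ‖ ^ (((l : ℝ) + 1) / eps)) ^ eps)⁻¹ • (h θ - a • θ)) :
    ∀ (θ : EuclideanSpace ℝ (Fin d)) (lam eps : ℝ),
      0 < lam → lam < 1 → 0 < eps → eps ≤ 1 / 2 →
      ‖fderiv ℝ (hlam lam eps) θ‖ ≤
        (2 * a + 4 * K_H + ((l : ℝ) + 1) * (2 * K_h + a)) * lam ^ (-eps) :=
  kTULA_tamed_deriv_bound_general u hu h H hgrad hHess L K_H K_h a hK_H hK_h ha l hH_bd hh_bd hlam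
    hlam_def
end

section
/- Under the standing assumptions, for every θ ∈ ℝ^d, every 0 < λ < 1 and every ε_h ∈ (0,1/2], the taming error satisfies |h(θ) − h_λ(θ)|² ≤ 4 λ² (K_h + a)² (1 + |θ|^{2(l+1)(1+1/ε_h)}). -/
/-!
With `p = (l+1)/ε`, `x = λ‖θ‖^p` and `t = (1 + x)^ε`, the taming error is `h θ - h_λ θ = (1 - t⁻¹) • (h θ - a • θ)`.
Since `1 ≤ t ≤ 1 + x` for `ε ≤ 1`, the factor lies in `[0, x]`, while `‖h θ - a • θ‖ ≤ (K_h + a)(1 + ‖θ‖^(l+1))`.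
Squaring, `(‖θ‖^p + ‖θ‖^(p+l+1))² ≤ 4(1 + ‖θ‖^(2(p+l+1)))` because `‖θ‖^p` is at most `1` or at most `‖θ‖^(p+l+1)`.
-/

open Real

theorem one_sub_inv_one_add_rpow_mem_Icc {x ε : ℝ} (hx : 0 ≤ x) (hε0 : 0 ≤ ε) (hε1 : ε ≤ 1) :
    1 - ((1 + x) ^ ε)⁻¹ ∈ Set.Icc 0 x := by
  have hbase : 1 ≤ 1 + x := le_add_of_nonneg_right hx
  have ht1 : 1 ≤ (1 + x) ^ ε := one_le_rpow hbase hε0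
  have htx : (1 + x) ^ ε ≤ 1 + x := by
    simpa using rpow_le_rpow_of_exponent_le hbase hε1
  have hinv : ((1 + x) ^ ε)⁻¹ ≤ 1 := inv_le_one_of_one_le₀ ht1
  refine ⟨sub_nonneg.mpr hinv, ?_⟩
  have : 1 - ((1 + x) ^ ε)⁻¹ ≤ (1 + x) ^ ε - 1 := by
    rw [sub_le_sub_iff]
    nlinarith [mul_inv_cancel₀ (zero_lt_one.trans_le ht1).ne']
  linarith

theorem norm_sub_smul_le_of_norm_le {E : Type*} [SeminormedAddCommGroup E] [NormedSpace ℝ E]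
    {v x : E} {K a : ℝ} {n : ℕ} (ha : 0 ≤ a) (hv : ‖v‖ ≤ K * (1 + ‖x‖ ^ (n + 1))) :
    ‖v - a • x‖ ≤ (K + a) * (1 + ‖x‖ ^ (n + 1)) := by
  have hx : ‖x‖ ≤ 1 + ‖x‖ ^ (n + 1) := by
    rcases le_total ‖x‖ 1 with hx1 | hx1
    · linarith [pow_nonneg (norm_nonneg x) (n + 1)]
    · linarith [le_self_pow₀ hx1 (n.add_one_ne_zero)]
  calc ‖v - a • x‖ ≤ ‖v‖ + a * ‖x‖ := by
        simpa only [norm_smul_of_nonneg ha] using norm_sub_le v (a • x)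
    _ ≤ K * (1 + ‖x‖ ^ (n + 1)) + a * (1 + ‖x‖ ^ (n + 1)) := by gcongr
    _ = (K + a) * (1 + ‖x‖ ^ (n + 1)) := by ring

theorem sq_rpow_mul_one_add_pow_le {r p : ℝ} (hr : 0 ≤ r) (hp : 0 < p) (m : ℕ) :
    (r ^ p * (1 + r ^ m)) ^ 2 ≤ 4 * (1 + r ^ (2 * (p + m))) := by
  set A := r ^ p
  set B := r ^ (p + m)
  have hsplit : A * (1 + r ^ m) = A + B := by
    rw [mul_add, mul_one, ← rpow_natCast, ← rpow_add' hr (by positivity)]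
  have hB : r ^ (2 * (p + m)) = B ^ 2 := by
    rw [mul_comm, rpow_mul hr, rpow_two]
  have hA : A ^ 2 ≤ 1 + B ^ 2 := by
    have hA0 : 0 ≤ A := rpow_nonneg hr p
    rcases le_total r 1 with hr1 | hr1
    · have : A ≤ 1 := rpow_le_one hr hr1 hp.le
      nlinarith [sq_nonneg B]
    · have : A ≤ B := rpow_le_rpow_of_exponent_le hr1 (by simp)
      nlinarith
  rw [hsplit, hB]
  nlinarith [sq_nonneg (A - B)]

theorem kTULA_taming_error_general
    {d : ℕ}
    (h : EuclideanSpace ℝ (Fin d) → EuclideanSpace ℝ (Fin d))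
    (K_h a : ℝ)
    (ha : 0 < a)
    (l : ℕ)
    (hh_bd : ∀ θ : EuclideanSpace ℝ (Fin d), ‖h θ‖ ≤ K_h * (1 + ‖θ‖ ^ (l + 1)))
    (hlam : ℝ → ℝ → EuclideanSpace ℝ (Fin d) → EuclideanSpace ℝ (Fin d))
    (hlam_def : ∀ (lam eps : ℝ) (θ : EuclideanSpace ℝ (Fin d)),
      hlam lam eps θ =
        a • θ + ((1 + lam * ‖θ‖ ^ (((l : ℝ) + 1) / eps)) ^ eps)⁻¹ • (h θ - a • θ)) :
    ∀ (θ : EuclideanSpace ℝ (Fin d)) (lam eps : ℝ),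
      0 < lam → lam < 1 → 0 < eps → eps ≤ 1 / 2 →
      ‖h θ - hlam lam eps θ‖ ^ 2 ≤
        4 * lam ^ 2 * (K_h + a) ^ 2 *
          (1 + ‖θ‖ ^ (2 * ((l : ℝ) + 1) * (1 + 1 / eps))) := by
  intro θ lam eps hlam0 _ heps0 heps2
  set p := ((l : ℝ) + 1) / eps
  set x := lam * ‖θ‖ ^ p
  obtain ⟨hfac0, hfac⟩ :=
    one_sub_inv_one_add_rpow_mem_Icc (x := x) (by positivity) heps0.le (by linarith)
  have hdiff : h θ - hlam lam eps θ = (1 - ((1 + x) ^ eps)⁻¹) • (h θ - a • θ) := by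
    rw [hlam_def]
    module
  have hbound : ‖h θ - hlam lam eps θ‖ ≤
      lam * (K_h + a) * (‖θ‖ ^ p * (1 + ‖θ‖ ^ (l + 1))) := by
    rw [hdiff, norm_smul_of_nonneg hfac0]
    calc _ ≤ x * ((K_h + a) * (1 + ‖θ‖ ^ (l + 1))) :=
          mul_le_mul hfac (norm_sub_smul_le_of_norm_le ha.le (hh_bd θ)) (norm_nonneg _)
            (by positivity)
      _ = _ := by ring
  have hexp : 2 * ((l : ℝ) + 1) * (1 + 1 / eps) = 2 * (p + ((l + 1 : ℕ) : ℝ)) := by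
    simp only [p]
    push_cast
    ring
  calc ‖h θ - hlam lam eps θ‖ ^ 2
      ≤ (lam * (K_h + a)) ^ 2 * (‖θ‖ ^ p * (1 + ‖θ‖ ^ (l + 1))) ^ 2 := by
        rw [← mul_pow]
        exact pow_le_pow_left₀ (norm_nonneg _) hbound 2
    _ ≤ (lam * (K_h + a)) ^ 2 * (4 * (1 + ‖θ‖ ^ (2 * (p + ((l + 1 : ℕ) : ℝ))))) := by
        gcongr
        exact sq_rpow_mul_one_add_pow_le (norm_nonneg θ) (by positivity) (l + 1)
    _ = _ := by rw [hexp]; ring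

theorem kTULA_taming_error
    {d : ℕ} (hd : 0 < d)
    (u : EuclideanSpace ℝ (Fin d) → ℝ) (hu : ContDiff ℝ 3 u)
    (h : EuclideanSpace ℝ (Fin d) → EuclideanSpace ℝ (Fin d))
    (H : EuclideanSpace ℝ (Fin d) →
      EuclideanSpace ℝ (Fin d) →L[ℝ] EuclideanSpace ℝ (Fin d))
    (hgrad : ∀ θ, h θ = gradient u θ)
    (hHess : ∀ θ, H θ = fderiv ℝ (gradient u) θ)
    (L K_H K_h a b : ℝ)
    (hL : 0 < L) (hK_H : 0 < K_H) (hK_h : 0 < K_h) (ha : 0 < a) (hb : 0 < b)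
    (l : ℕ) (hl : 1 ≤ l)
    (hH_lip : ∀ θ θ' : EuclideanSpace ℝ (Fin d),
      ‖H θ - H θ'‖ ≤ L * (1 + ‖θ‖ + ‖θ'‖) ^ (l - 1) * ‖θ - θ'‖)
    (hH_bd : ∀ θ : EuclideanSpace ℝ (Fin d), ‖H θ‖ ≤ K_H * (1 + ‖θ‖ ^ l))
    (hh_bd : ∀ θ : EuclideanSpace ℝ (Fin d), ‖h θ‖ ≤ K_h * (1 + ‖θ‖ ^ (l + 1)))
    (hdiss : ∀ θ : EuclideanSpace ℝ (Fin d), a * ‖θ‖ ^ 2 - b ≤ (inner ℝ (h θ) θ : ℝ))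
    (hlam : ℝ → ℝ → EuclideanSpace ℝ (Fin d) → EuclideanSpace ℝ (Fin d))
    (hlam_def : ∀ (lam eps : ℝ) (θ : EuclideanSpace ℝ (Fin d)),
      hlam lam eps θ =
        a • θ + ((1 + lam * ‖θ‖ ^ (((l : ℝ) + 1) / eps)) ^ eps)⁻¹ • (h θ - a • θ)) :
    ∀ (θ : EuclideanSpace ℝ (Fin d)) (lam eps : ℝ),
      0 < lam → lam < 1 → 0 < eps → eps ≤ 1 / 2 →
      ‖h θ - hlam lam eps θ‖ ^ 2 ≤
        4 * lam ^ 2 * (K_h + a) ^ 2 *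
          (1 + ‖θ‖ ^ (2 * ((l : ℝ) + 1) * (1 + 1 / eps))) :=
  kTULA_taming_error_general h K_h a ha l hh_bd hlam hlam_def
end

section
/- Under the standing assumptions, for every integer p ≥ 2, every θ ∈ ℝ^d, every ε_h ∈ (0,1/2], every 0 < λ ≤ min{1, 1/(8a)} and every s ∈ (0,1], the one-step drift map satisfies |θ − λ s h_λ(θ)|^{2p} ≤ (1 − aλs/2)^{p−1}(1 − aλs)|θ|^{2p} + λ s (1 + 2/a)^{p−1} (2b + 8K_h²)^p. -/
open Real

open scoped RealInnerProductSpace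

/-!
Writing `v` for the tamed drift, the taming factor `T = (1 + λ|θ|^{(l+1)/ε})^ε` satisfies
`T ≥ 1` and `T ≥ λ^ε |θ|^{l+1}`, so `|v| ≤ a|θ| + 2K_h/√λ`, while `v` is a convex combination of
`aθ` and `h(θ)` and hence inherits the dissipativity `⟨v, θ⟩ ≥ a|θ|² - b`. Expanding the square
gives `|θ - γv|² ≤ (1 - aγ)|θ|² + γ(2b + 8K_h²)` for `γ = λs`, and the `p`-th power of the
right-hand side is split by convexity of `x ↦ x^p` with weights `1/(1 + aγ/2)` and
`(aγ/2)/(1 + aγ/2)`.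
-/

lemma add_pow_succ_le_weighted {A B δ : ℝ} (hA : 0 ≤ A) (hB : 0 ≤ B) (hδ : 0 < δ) (m : ℕ) :
    (A + B) ^ (m + 1) ≤ (1 + δ) ^ m * A ^ (m + 1) + ((1 + δ) / δ) ^ m * B ^ (m + 1) := by
  have hconv := (convexOn_pow (m + 1)).2 (Set.mem_Ici.2 (by positivity : 0 ≤ (1 + δ) * A))
    (Set.mem_Ici.2 (by positivity : 0 ≤ (1 + δ) / δ * B))
    (by positivity : (0 : ℝ) ≤ 1 / (1 + δ)) (by positivity : (0 : ℝ) ≤ δ / (1 + δ))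
    (by field_simp)
  have hsum : 1 / (1 + δ) * ((1 + δ) * A) + δ / (1 + δ) * ((1 + δ) / δ * B) = A + B := by
    field_simp
  simp only [smul_eq_mul, hsum] at hconv
  refine hconv.trans_eq ?_
  rw [mul_pow, mul_pow, pow_succ (1 + δ), pow_succ ((1 + δ) / δ)]
  field_simp

lemma one_sub_mul_add_pow_le {a γ c Y : ℝ} (ha : 0 < a) (hγ : 0 < γ) (haγ : a * γ ≤ 1)
    (hγ1 : γ ≤ 1) (hc : 0 ≤ c) (hY : 0 ≤ Y) {p : ℕ} (hp : 1 ≤ p) :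
    ((1 - a * γ) * Y + γ * c) ^ p ≤
      (1 - a * γ / 2) ^ (p - 1) * (1 - a * γ) * Y ^ p + γ * (1 + 2 / a) ^ (p - 1) * c ^ p := by
  obtain ⟨m, rfl⟩ := Nat.exists_eq_add_of_le' hp
  rw [Nat.add_sub_cancel]
  have hD : 0 < a * γ := mul_pos ha hγ
  have hweight : (1 + a * γ / 2) / (a * γ / 2) * γ = 2 / a + γ := by
    field_simp
  calc ((1 - a * γ) * Y + γ * c) ^ (m + 1)
      ≤ (1 + a * γ / 2) ^ m * ((1 - a * γ) * Y) ^ (m + 1) +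
          ((1 + a * γ / 2) / (a * γ / 2)) ^ m * (γ * c) ^ (m + 1) :=
        add_pow_succ_le_weighted (mul_nonneg (by linarith) hY) (by positivity) (by positivity) m
    _ = ((1 + a * γ / 2) * (1 - a * γ)) ^ m * (1 - a * γ) * Y ^ (m + 1) +
          γ * ((1 + a * γ / 2) / (a * γ / 2) * γ) ^ m * c ^ (m + 1) := by
        rw [mul_pow (1 - a * γ), mul_pow γ, mul_pow _ (1 - a * γ), mul_pow _ γ, pow_succ γ,
          pow_succ (1 - a * γ)]
        ring
    _ ≤ _ := by
        rw [hweight]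
        have hcontr : 0 ≤ (1 + a * γ / 2) * (1 - a * γ) :=
          mul_nonneg (by positivity) (by linarith)
        gcongr (?_ : ℝ) ^ m * _ * _ + _ * (?_ : ℝ) ^ m * _
        · nlinarith
        · linarith

lemma rpow_mul_rpow_le_one_add_mul_rpow_rpow {lam r ε q : ℝ} (hlam : 0 ≤ lam) (hr : 0 ≤ r)
    (hε : 0 < ε) : lam ^ ε * r ^ q ≤ (1 + lam * r ^ (q / ε)) ^ ε := by
  have hsplit : (lam * r ^ (q / ε)) ^ ε = lam ^ ε * r ^ q := by
    rw [mul_rpow hlam (rpow_nonneg hr _), ← rpow_mul hr, div_mul_cancel₀ q hε.ne']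
  rw [← hsplit]
  exact rpow_le_rpow (by positivity) (by linarith) hε.le

lemma inv_one_add_mul_rpow_rpow_mul_le {lam r ε q : ℝ} (hlam0 : 0 < lam) (hlam1 : lam ≤ 1)
    (hr : 0 ≤ r) (hε0 : 0 < ε) (hε : ε ≤ 1 / 2) :
    ((1 + lam * r ^ (q / ε)) ^ ε)⁻¹ * (1 + r ^ q) ≤ 2 / √lam := by
  set T := (1 + lam * r ^ (q / ε)) ^ ε
  have hT1 : 1 ≤ T := one_le_rpow (by linarith [mul_nonneg hlam0.le (rpow_nonneg hr (q / ε))])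
    hε0.le
  have hT := rpow_mul_rpow_le_one_add_mul_rpow_rpow (q := q) hlam0.le hr hε0
  have hsqrt : √lam ≤ lam ^ ε := by
    rw [sqrt_eq_rpow]
    exact rpow_le_rpow_of_exponent_ge hlam0 hlam1 hε
  have hlamε : lam ^ ε ≤ 1 := rpow_le_one hlam0.le hlam1 hε0.le
  have hrq : 0 ≤ r ^ q := rpow_nonneg hr q
  rw [inv_mul_le_iff₀ (by linarith), mul_div_assoc', le_div_iff₀ (sqrt_pos.2 hlam0)]
  nlinarith

section TamedDrift

variable {E : Type*} [NormedAddCommGroup E] [InnerProductSpace ℝ E]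

lemma le_inner_add_smul_sub {a b t : ℝ} {g θ : E} (hb : 0 ≤ b) (ht0 : 0 ≤ t) (ht1 : t ≤ 1)
    (hg : a * ‖θ‖ ^ 2 - b ≤ ⟪g, θ⟫) : a * ‖θ‖ ^ 2 - b ≤ ⟪a • θ + t • (g - a • θ), θ⟫ := by
  rw [inner_add_left, real_inner_smul_left, real_inner_smul_left, inner_sub_left,
    real_inner_smul_left, real_inner_self_eq_norm_sq]
  nlinarith [mul_le_mul_of_nonneg_left hg ht0]

lemma norm_add_smul_sub_le {a t : ℝ} {g θ : E} (ha : 0 ≤ a) (ht0 : 0 ≤ t) (ht1 : t ≤ 1) :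
    ‖a • θ + t • (g - a • θ)‖ ≤ a * ‖θ‖ + t * ‖g‖ := by
  have hcomb : a • θ + t • (g - a • θ) = ((1 - t) * a) • θ + t • g := by
    rw [smul_sub, mul_smul, sub_smul, one_smul]
    abel
  rw [hcomb]
  refine (norm_add_le _ _).trans ?_
  rw [norm_smul, norm_smul, Real.norm_of_nonneg (by nlinarith), Real.norm_of_nonneg ht0]
  nlinarith [mul_nonneg (mul_nonneg ht0 ha) (norm_nonneg θ)]

lemma norm_add_smul_sub_sq_le {a t C : ℝ} {g θ : E} (ha : 0 ≤ a) (ht0 : 0 ≤ t) (ht1 : t ≤ 1)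
    (hg : t * ‖g‖ ≤ C) : ‖a • θ + t • (g - a • θ)‖ ^ 2 ≤ 2 * a ^ 2 * ‖θ‖ ^ 2 + 2 * C ^ 2 := by
  have hnorm : ‖a • θ + t • (g - a • θ)‖ ≤ a * ‖θ‖ + C :=
    (norm_add_smul_sub_le ha ht0 ht1).trans (by linarith)
  nlinarith [pow_le_pow_left₀ (norm_nonneg _) hnorm 2, sq_nonneg (a * ‖θ‖ - C)]

lemma norm_sub_smul_sq_le {a b γ B : ℝ} {v θ : E} (ha : 0 ≤ a) (hγ : 0 ≤ γ) (haγ : 2 * a * γ ≤ 1)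
    (hinner : a * ‖θ‖ ^ 2 - b ≤ ⟪v, θ⟫) (hv : ‖v‖ ^ 2 ≤ 2 * a ^ 2 * ‖θ‖ ^ 2 + B) :
    ‖θ - γ • v‖ ^ 2 ≤ (1 - a * γ) * ‖θ‖ ^ 2 + γ * (2 * b + γ * B) := by
  rw [norm_sub_sq_real, real_inner_smul_right, real_inner_comm, norm_smul, mul_pow,
    Real.norm_eq_abs, sq_abs]
  nlinarith [mul_le_mul_of_nonneg_left hv (sq_nonneg γ), mul_le_mul_of_nonneg_left hinner hγ,
    mul_nonneg (mul_nonneg (mul_nonneg ha hγ) (sq_nonneg ‖θ‖)) (by linarith : 0 ≤ 1 - 2 * a * γ)]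

end TamedDrift

theorem kTULA_one_step_contraction_2p_general
    {d : ℕ}
    (h : EuclideanSpace ℝ (Fin d) → EuclideanSpace ℝ (Fin d))
    (K_h a b : ℝ)
    (hK_h : 0 < K_h) (ha : 0 < a) (hb : 0 < b)
    (l : ℕ)
    (hh_bd : ∀ θ : EuclideanSpace ℝ (Fin d), ‖h θ‖ ≤ K_h * (1 + ‖θ‖ ^ (l + 1)))
    (hdiss : ∀ θ : EuclideanSpace ℝ (Fin d), a * ‖θ‖ ^ 2 - b ≤ (inner ℝ (h θ) θ : ℝ))
    (hlam : ℝ → ℝ → EuclideanSpace ℝ (Fin d) → EuclideanSpace ℝ (Fin d))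
    (hlam_def : ∀ (lam eps : ℝ) (θ : EuclideanSpace ℝ (Fin d)),
      hlam lam eps θ =
        a • θ + ((1 + lam * ‖θ‖ ^ (((l : ℝ) + 1) / eps)) ^ eps)⁻¹ • (h θ - a • θ)) :
    ∀ (p : ℕ), 2 ≤ p →
    ∀ (θ : EuclideanSpace ℝ (Fin d)) (lam eps s : ℝ),
      0 < eps → eps ≤ 1 / 2 →
      0 < lam → lam ≤ min 1 (1 / (8 * a)) →
      0 < s → s ≤ 1 →
      ‖θ - (lam * s) • hlam lam eps θ‖ ^ (2 * p) ≤
        (1 - a * lam * s / 2) ^ (p - 1) * (1 - a * lam * s) * ‖θ‖ ^ (2 * p) +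
          lam * s * (1 + 2 / a) ^ (p - 1) * (2 * b + 8 * K_h ^ 2) ^ p := by
  intro p hp θ lam ε s hε0 hε hlam0 hlamle hs0 hs1
  obtain ⟨hlam1, hlam8⟩ := le_min_iff.1 hlamle
  have haγ : a * (lam * s) ≤ 1 / 8 := by
    rw [le_div_iff₀ (by positivity)] at hlam8
    nlinarith
  set t := ((1 + lam * ‖θ‖ ^ (((l : ℝ) + 1) / ε)) ^ ε)⁻¹
  have ht0 : 0 ≤ t := inv_nonneg.2 (by positivity)
  have ht1 : t ≤ 1 :=
    inv_le_one_of_one_le₀ (one_le_rpow (le_add_of_nonneg_right (by positivity)) hε0.le)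
  have hgrowth : t * ‖h θ‖ ≤ K_h * (2 / √lam) := by
    have htamed := inv_one_add_mul_rpow_rpow_mul_le (q := (l : ℝ) + 1) hlam0 hlam1
      (norm_nonneg θ) hε0 hε
    rw [show ‖θ‖ ^ ((l : ℝ) + 1) = ‖θ‖ ^ (l + 1) by exact_mod_cast rpow_natCast ‖θ‖ (l + 1)]
      at htamed
    nlinarith [mul_le_mul_of_nonneg_left (hh_bd θ) ht0, mul_le_mul_of_nonneg_left htamed hK_h.le]
  have hstep := norm_sub_smul_sq_le (γ := lam * s) ha.le (by positivity) (by linarith)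
    (hlam_def lam ε θ ▸ le_inner_add_smul_sub hb.le ht0 ht1 (hdiss θ))
    (hlam_def lam ε θ ▸ norm_add_smul_sub_sq_le ha.le ht0 ht1 hgrowth)
  have hnoise : lam * s * (2 * (K_h * (2 / √lam)) ^ 2) = 8 * K_h ^ 2 * s := by
    rw [mul_pow, div_pow, sq_sqrt hlam0.le]
    field_simp
    ring
  rw [hnoise] at hstep
  rw [pow_mul, pow_mul, mul_assoc a lam s]
  calc (‖θ - (lam * s) • hlam lam ε θ‖ ^ 2) ^ p
      ≤ ((1 - a * (lam * s)) * ‖θ‖ ^ 2 + lam * s * (2 * b + 8 * K_h ^ 2)) ^ p := by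
        refine pow_le_pow_left₀ (by positivity) (hstep.trans ?_) p
        have hs_noise : 8 * K_h ^ 2 * s ≤ 8 * K_h ^ 2 := by nlinarith [sq_nonneg K_h]
        gcongr
    _ ≤ _ := one_sub_mul_add_pow_le ha (by positivity) (by linarith)
        (by nlinarith) (by positivity) (by positivity) (by omega)

theorem kTULA_one_step_contraction_2p
    {d : ℕ} (hd : 0 < d)
    (u : EuclideanSpace ℝ (Fin d) → ℝ) (hu : ContDiff ℝ 3 u)
    (h : EuclideanSpace ℝ (Fin d) → EuclideanSpace ℝ (Fin d))
    (H : EuclideanSpace ℝ (Fin d) →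
      EuclideanSpace ℝ (Fin d) →L[ℝ] EuclideanSpace ℝ (Fin d))
    (hgrad : ∀ θ, h θ = gradient u θ)
    (hHess : ∀ θ, H θ = fderiv ℝ (gradient u) θ)
    (L K_H K_h a b : ℝ)
    (hL : 0 < L) (hK_H : 0 < K_H) (hK_h : 0 < K_h) (ha : 0 < a) (hb : 0 < b)
    (l : ℕ) (hl : 1 ≤ l)
    (hH_lip : ∀ θ θ' : EuclideanSpace ℝ (Fin d),
      ‖H θ - H θ'‖ ≤ L * (1 + ‖θ‖ + ‖θ'‖) ^ (l - 1) * ‖θ - θ'‖)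
    (hH_bd : ∀ θ : EuclideanSpace ℝ (Fin d), ‖H θ‖ ≤ K_H * (1 + ‖θ‖ ^ l))
    (hh_bd : ∀ θ : EuclideanSpace ℝ (Fin d), ‖h θ‖ ≤ K_h * (1 + ‖θ‖ ^ (l + 1)))
    (hdiss : ∀ θ : EuclideanSpace ℝ (Fin d), a * ‖θ‖ ^ 2 - b ≤ (inner ℝ (h θ) θ : ℝ))
    (hlam : ℝ → ℝ → EuclideanSpace ℝ (Fin d) → EuclideanSpace ℝ (Fin d))
    (hlam_def : ∀ (lam eps : ℝ) (θ : EuclideanSpace ℝ (Fin d)),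
      hlam lam eps θ =
        a • θ + ((1 + lam * ‖θ‖ ^ (((l : ℝ) + 1) / eps)) ^ eps)⁻¹ • (h θ - a • θ)) :
    ∀ (p : ℕ), 2 ≤ p →
    ∀ (θ : EuclideanSpace ℝ (Fin d)) (lam eps s : ℝ),
      0 < eps → eps ≤ 1 / 2 →
      0 < lam → lam ≤ min 1 (1 / (8 * a)) →
      0 < s → s ≤ 1 →
      ‖θ - (lam * s) • hlam lam eps θ‖ ^ (2 * p) ≤
        (1 - a * lam * s / 2) ^ (p - 1) * (1 - a * lam * s) * ‖θ‖ ^ (2 * p) +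
          lam * s * (1 + 2 / a) ^ (p - 1) * (2 * b + 8 * K_h ^ 2) ^ p :=
  kTULA_one_step_contraction_2p_general h K_h a b hK_h ha hb l hh_bd hdiss hlam hlam_def
end

section
/- Let l ≥ 1 be an integer, ε_h ∈ (0,1/2] and 0 < λ < 1. Then for all θ, θ' ∈ ℝ^d, (1 + λ|θ'|^{(l+1)/ε_h})^{ε_h} − (1 + λ|θ|^{(l+1)/ε_h})^{ε_h} ≤ √2 · λ^{ε_h} (l+1)(1 + |θ| + |θ'|)^l |θ − θ'|. -/
/-!
Write `φ(t) = (1 + λ t^{(l+1)/ε})^ε` for `t = |θ| ≥ 0`. Since `t ↦ t^ε` is concave, its increments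
over a step of length `1` shrink as the base point grows, so shifting both arguments by `1` can
only decrease a difference of `ε`-th powers: `|φ(t') - φ(t)| ≤ |(λ t'^{(l+1)/ε})^ε - (λ t^{(l+1)/ε})^ε|
= λ^ε |t'^{l+1} - t^{l+1}|`. The mean value bound for `t ↦ t^{l+1}` and the reverse triangle
inequality `| |θ'| - |θ| | ≤ |θ - θ'|` finish the proof.
-/

open Real

theorem ConcaveOn.map_add_sub_map_le_of_le {𝕜 : Type*} [Field 𝕜] [LinearOrder 𝕜]
    [IsStrictOrderedRing 𝕜] {s : Set 𝕜} {f : 𝕜 → 𝕜} (hf : ConcaveOn 𝕜 s f) {u v h : 𝕜}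
    (hu : u ∈ s) (hvh : v + h ∈ s) (huv : u ≤ v) (hh : 0 ≤ h) :
    f (v + h) - f v ≤ f (u + h) - f u := by
  rcases hh.eq_or_lt with rfl | hpos
  · simp
  have hD : 0 < v + h - u := by linarith
  set a := (v - u) / (v + h - u)
  set b := h / (v + h - u)
  have ha : 0 ≤ a := div_nonneg (sub_nonneg.2 huv) hD.le
  have hb : 0 ≤ b := div_nonneg hpos.le hD.le
  have hab : a + b = 1 := by
    simp only [a, b]; field_simp; ring
  -- `u + h` and `v` are the two convex combinations of `u` and `v + h` with swapped weights.
  have hleft : a • u + b • (v + h) = u + h := by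
    simp only [a, b, smul_eq_mul]; field_simp; ring
  have hright : b • u + a • (v + h) = v := by
    simp only [a, b, smul_eq_mul]; field_simp; ring
  have h₁ := hf.2 hu hvh ha hb hab
  have h₂ := hf.2 hu hvh hb ha (by rwa [add_comm])
  rw [hleft] at h₁
  rw [hright] at h₂
  simp only [smul_eq_mul] at h₁ h₂
  clear_value a b
  linear_combination h₁ + h₂ - (f u + f (v + h)) * hab

theorem abs_one_add_rpow_sub_one_add_rpow_le {ε u v : ℝ} (hε₀ : 0 ≤ ε) (hε₁ : ε ≤ 1)
    (hu : 0 ≤ u) (hv : 0 ≤ v) :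
    |(1 + v) ^ ε - (1 + u) ^ ε| ≤ |v ^ ε - u ^ ε| := by
  wlog huv : u ≤ v generalizing u v
  · rw [abs_sub_comm, abs_sub_comm (v ^ ε)]
    exact this hv hu (le_of_not_ge huv)
  have hincr := (concaveOn_rpow hε₀ hε₁).map_add_sub_map_le_of_le hu
    (show v + 1 ∈ Set.Ici 0 by simp only [Set.mem_Ici]; linarith) huv zero_le_one
  rw [abs_of_nonneg (sub_nonneg.2 (by gcongr)), abs_of_nonneg (sub_nonneg.2 (by gcongr))]
  rw [add_comm 1 v, add_comm 1 u]
  linarith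

theorem mul_rpow_div_rpow {a z q ε : ℝ} (ha : 0 ≤ a) (hz : 0 ≤ z) (hε : ε ≠ 0) :
    (a * z ^ (q / ε)) ^ ε = a ^ ε * z ^ q := by
  rw [mul_rpow ha (rpow_nonneg hz _), ← rpow_mul hz, div_mul_cancel₀ q hε]

theorem abs_one_add_mul_rpow_sub_le {ε lam x y : ℝ} (l : ℕ) (hε₀ : 0 < ε) (hε₁ : ε ≤ 1)
    (hlam : 0 ≤ lam) (hx : 0 ≤ x) (hy : 0 ≤ y) :
    |(1 + lam * y ^ (((l : ℝ) + 1) / ε)) ^ ε - (1 + lam * x ^ (((l : ℝ) + 1) / ε)) ^ ε| ≤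
      lam ^ ε * ((l : ℝ) + 1) * max y x ^ l * |y - x| := by
  have hpow : ∀ z : ℝ, 0 ≤ z → (lam * z ^ (((l : ℝ) + 1) / ε)) ^ ε = lam ^ ε * z ^ (l + 1) :=
    fun z hz => by
      rw [mul_rpow_div_rpow hlam hz hε₀.ne', ← rpow_natCast]
      push_cast; rfl
  calc _ ≤ |lam ^ ε * y ^ (l + 1) - lam ^ ε * x ^ (l + 1)| := by
        rw [← hpow y hy, ← hpow x hx]
        exact abs_one_add_rpow_sub_one_add_rpow_le hε₀.le hε₁ (by positivity) (by positivity)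
    _ = lam ^ ε * |y ^ (l + 1) - x ^ (l + 1)| := by
        rw [← mul_sub, abs_mul, abs_of_nonneg (rpow_nonneg hlam ε)]
    _ ≤ lam ^ ε * (|y - x| * ((l : ℝ) + 1) * max |y| |x| ^ l) := by
        gcongr
        simpa using abs_pow_sub_pow_le y x (l + 1)
    _ = lam ^ ε * ((l : ℝ) + 1) * max y x ^ l * |y - x| := by
        rw [abs_of_nonneg hx, abs_of_nonneg hy]; ring

theorem taming_denominator_lipschitz_general
    {d : ℕ}
    (l : ℕ) (eps lam : ℝ)
    (heps0 : 0 < eps) (heps1 : eps ≤ 1 / 2) (hlam0 : 0 < lam) :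
    ∀ θ θ' : EuclideanSpace ℝ (Fin d),
      (1 + lam * ‖θ'‖ ^ (((l : ℝ) + 1) / eps)) ^ eps -
          (1 + lam * ‖θ‖ ^ (((l : ℝ) + 1) / eps)) ^ eps ≤
        Real.sqrt 2 * lam ^ eps * ((l : ℝ) + 1) * (1 + ‖θ‖ + ‖θ'‖) ^ l * ‖θ - θ'‖ := by
  intro θ θ'
  have hmax : max ‖θ'‖ ‖θ‖ ≤ 1 + ‖θ‖ + ‖θ'‖ :=
    max_le (by linarith [norm_nonneg θ]) (by linarith [norm_nonneg θ'])
  have hdist : |‖θ'‖ - ‖θ‖| ≤ ‖θ - θ'‖ := by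
    rw [norm_sub_rev]; exact abs_norm_sub_norm_le θ' θ
  have hsqrt : 1 ≤ Real.sqrt 2 := by simp [Real.one_le_sqrt]
  calc _ ≤ |_| := le_abs_self _
    _ ≤ lam ^ eps * ((l : ℝ) + 1) * max ‖θ'‖ ‖θ‖ ^ l * |‖θ'‖ - ‖θ‖| :=
        abs_one_add_mul_rpow_sub_le l heps0 (by linarith) hlam0.le (norm_nonneg θ) (norm_nonneg θ')
    _ ≤ 1 * lam ^ eps * ((l : ℝ) + 1) * (1 + ‖θ‖ + ‖θ'‖) ^ l * ‖θ - θ'‖ := by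
        rw [one_mul]; gcongr
    _ ≤ _ := by gcongr

/-- Lipschitz-type estimate for the taming denominator
`θ ↦ (1 + λ|θ|^{(l+1)/ε_h})^{ε_h}`. -/
theorem taming_denominator_lipschitz
    {d : ℕ} (hd : 0 < d)
    (l : ℕ) (hl : 1 ≤ l) (eps lam : ℝ)
    (heps0 : 0 < eps) (heps1 : eps ≤ 1 / 2) (hlam0 : 0 < lam) (hlam1 : lam < 1) :
    ∀ θ θ' : EuclideanSpace ℝ (Fin d),
      (1 + lam * ‖θ'‖ ^ (((l : ℝ) + 1) / eps)) ^ eps -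
          (1 + lam * ‖θ‖ ^ (((l : ℝ) + 1) / eps)) ^ eps ≤
        Real.sqrt 2 * lam ^ eps * ((l : ℝ) + 1) * (1 + ‖θ‖ + ‖θ'‖) ^ l * ‖θ - θ'‖ :=
  taming_denominator_lipschitz_general l eps lam heps0 heps1 hlam0
end
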